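/- Let N ∈ ℕ and Q_N = {k/N : k ∈ ℤ}. For every f ∈ C[0,1] and ε > 0, if N is large enough there is a continuous piecewise affine function g : [0,1] → ℝ with ‖f − g‖_∞ < 2ε whose graph G_g decomposes as a union H ∪ V of compact sets such that π₂(H) and π₁(V) are both contained in {t ∈ ℝ : cos(2πNt) ≥ 0.99 and cos(4πNt) ≥ 0.99}, where π₁, π₂ are the coordinate projections on ℝ². -/
import Mathlib


open Set

/-- The set where both `cos(2πNt)` and `cos(4πNt)` are at least `0.99`. -/
def goodSet (N : ℕ) : Set ℝ :=
  {t : ℝ | Real.cos (2 * Real.pi * N * t) ≥ 0.99 ∧ Real.cos (4 * Real.pi * N * t) ≥ 0.99}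

def graphOf (g : C(Set.Icc (0:ℝ) 1, ℝ)) : Set (ℝ × ℝ) :=
  {p : ℝ × ℝ | ∃ x : Set.Icc (0:ℝ) 1, p.1 = (x : ℝ) ∧ p.2 = g x}

/-- `g` is continuous piecewise affine on `[0,1]`. -/
def PiecewiseAffine (g : C(Set.Icc (0:ℝ) 1, ℝ)) : Prop :=
  ∃ (n : ℕ) (x : ℕ → ℝ), 0 < n ∧ x 0 = 0 ∧ x n = 1 ∧ (∀ k < n, x k < x (k + 1)) ∧
    ∀ k < n, ∃ a b : ℝ, ∀ t : Set.Icc (0:ℝ) 1,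
      (t : ℝ) ∈ Set.Icc (x k) (x (k + 1)) → g t = a * (t : ℝ) + b

noncomputable section AuxGood

def ramp (u : ℝ) : ℝ := min 1 (max 0 u)

lemma ramp_of_nonpos {u : ℝ} (h : u ≤ 0) : ramp u = 0 := by simp [ramp, max_eq_left h]

lemma ramp_of_one_le {u : ℝ} (h : 1 ≤ u) : ramp u = 1 := by
  have : (1:ℝ) ≤ max 0 u := le_max_of_le_right h
  simp [ramp, min_eq_left this]

lemma ramp_eq_self {u : ℝ} (h0 : 0 ≤ u) (h1 : u ≤ 1) : ramp u = u := by
  simp [ramp, max_eq_right h0, min_eq_right h1]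

lemma continuous_ramp : Continuous ramp := continuous_const.min (continuous_const.max continuous_id)

def yval (f : C(Set.Icc (0:ℝ) 1, ℝ)) (N : ℕ) (j : ℕ) : ℝ :=
  (round ((N:ℝ) * f (Set.projIcc 0 1 zero_le_one ((j:ℝ)/(N:ℝ))))) / N

def gFun (f : C(Set.Icc (0:ℝ) 1, ℝ)) (N : ℕ) : C(Set.Icc (0:ℝ) 1, ℝ) :=
  ⟨fun t => yval f N 0 + ∑ i ∈ Finset.range (N-1),
      (yval f N (i+1) - yval f N i) * ramp (100*((N:ℝ)*(t:ℝ) - (i+1)) + 1),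
   by
     apply Continuous.add continuous_const
     apply continuous_finset_sum
     intro i _
     exact continuous_const.mul (continuous_ramp.comp (by continuity))⟩

lemma gFun_apply (f : C(Set.Icc (0:ℝ) 1, ℝ)) (N : ℕ) (t : Set.Icc (0:ℝ) 1) :
    gFun f N t = yval f N 0 + ∑ i ∈ Finset.range (N-1),
      (yval f N (i+1) - yval f N i) * ramp (100*((N:ℝ)*(t:ℝ) - (i+1)) + 1) := rfl

lemma gFun_flat (f : C(Set.Icc (0:ℝ) 1, ℝ)) {N j : ℕ} (hj : j < N)
    (t : Set.Icc (0:ℝ) 1) (h1 : (j:ℝ) ≤ N * t) (h2 : (N:ℝ) * t ≤ j + 0.99) :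
    gFun f N t = yval f N j := by
  rw [gFun_apply]
  have hsum : ∀ i ∈ Finset.range (N-1),
      (yval f N (i+1) - yval f N i) * ramp (100*((N:ℝ)*(t:ℝ) - (i+1)) + 1)
      = if i < j then yval f N (i+1) - yval f N i else 0 := by
    intro i _
    by_cases hij : i < j
    · rw [if_pos hij, ramp_of_one_le, mul_one]
      have : (i:ℝ) + 1 ≤ j := by exact_mod_cast Nat.succ_le_of_lt hij
      nlinarith
    · rw [if_neg hij, ramp_of_nonpos, mul_zero]
      have : (j:ℝ) ≤ i := by exact_mod_cast Nat.le_of_not_lt hij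
      nlinarith
  rw [Finset.sum_congr rfl hsum]
  have hj' : j ≤ N - 1 := by omega
  rw [← Finset.sum_subset (Finset.range_subset_range.2 hj')
      (fun x _ hx => if_neg (by simpa using hx))]
  rw [Finset.sum_congr rfl (fun x hx => if_pos (Finset.mem_range.1 hx)),
    Finset.sum_range_sub (yval f N)]
  ring

lemma gFun_vert (f : C(Set.Icc (0:ℝ) 1, ℝ)) {N j : ℕ} (hj : j + 1 < N)
    (t : Set.Icc (0:ℝ) 1) (h1 : (j:ℝ) + 0.99 ≤ N * t) (h2 : (N:ℝ) * t ≤ j + 1) :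
    gFun f N t = yval f N j
      + (yval f N (j+1) - yval f N j) * (100*((N:ℝ)*(t:ℝ) - (j+1)) + 1) := by
  rw [gFun_apply]
  set c : ℕ → ℝ := fun i =>
    if i < j then yval f N (i+1) - yval f N i
    else if i = j then (yval f N (j+1) - yval f N j) * (100*((N:ℝ)*(t:ℝ) - (j+1)) + 1)
    else 0 with hc
  have hsum : ∀ i ∈ Finset.range (N-1),
      (yval f N (i+1) - yval f N i) * ramp (100*((N:ℝ)*(t:ℝ) - (i+1)) + 1) = c i := by
    intro i _
    rcases lt_trichotomy i j with hij | hij | hij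
    · rw [hc]; simp only [if_pos hij]
      rw [ramp_of_one_le, mul_one]
      have : (i:ℝ) + 1 ≤ j := by exact_mod_cast Nat.succ_le_of_lt hij
      nlinarith
    · subst hij
      rw [hc]; simp only [lt_irrefl, if_neg, if_pos rfl, ite_true, if_false]
      rw [ramp_eq_self] <;> push_cast <;> nlinarith
    · rw [hc]; simp only [if_neg (by omega : ¬ i < j), if_neg (by omega : ¬ i = j)]
      rw [ramp_of_nonpos, mul_zero]
      have : (j:ℝ) + 1 ≤ i := by exact_mod_cast hij
      nlinarith
  rw [Finset.sum_congr rfl hsum]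
  have hj' : j + 1 ≤ N - 1 := by omega
  rw [← Finset.sum_subset (Finset.range_subset_range.2 hj')
      (fun x _ hx => by
        have h1 : ¬ x < j := by simp at hx; omega
        have h2 : ¬ x = j := by simp at hx; omega
        simp [hc, h1, h2])]
  rw [Finset.sum_range_succ]
  have : ∀ x ∈ Finset.range j, c x = yval f N (x+1) - yval f N x := by
    intro x hx; simp [hc, Finset.mem_range.1 hx]
  rw [Finset.sum_congr rfl this, Finset.sum_range_sub (yval f N)]
  simp [hc]
  ring

lemma gFun_last (f : C(Set.Icc (0:ℝ) 1, ℝ)) {N : ℕ} (hN : 0 < N)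
    (t : Set.Icc (0:ℝ) 1) (h1 : (N:ℝ) - 1 ≤ N * t) :
    gFun f N t = yval f N (N-1) := by
  rw [gFun_apply]
  have hsum : ∀ i ∈ Finset.range (N-1),
      (yval f N (i+1) - yval f N i) * ramp (100*((N:ℝ)*(t:ℝ) - (i+1)) + 1)
      = yval f N (i+1) - yval f N i := by
    intro i hi
    rw [ramp_of_one_le, mul_one]
    have hi' : i + 1 ≤ N - 1 := Finset.mem_range.1 hi
    have : (i:ℝ) + 1 ≤ (N:ℝ) - 1 := by
      have h2 : ((i+1:ℕ):ℝ) ≤ ((N-1:ℕ):ℝ) := by exact_mod_cast hi'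
      push_cast [Nat.cast_sub hN] at h2
      linarith
    nlinarith
  rw [Finset.sum_congr rfl hsum, Finset.sum_range_sub (yval f N)]
  ring

lemma exists_mem_block {N : ℕ} (hN : 0 < N) {t : ℝ} (h0 : 0 ≤ t) (h1 : t ≤ 1) :
    ∃ j : ℕ, j < N ∧ (j:ℝ) ≤ N * t ∧ (N:ℝ) * t ≤ j + 1 := by
  have hNt : (0:ℝ) ≤ N * t := by positivity
  have hfl : (0:ℤ) ≤ ⌊(N:ℝ) * t⌋ := Int.le_floor.2 (by exact_mod_cast hNt)
  refine ⟨min (⌊(N:ℝ) * t⌋.toNat) (N-1), by omega, ?_, ?_⟩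
  · have h2 : ((⌊(N:ℝ) * t⌋.toNat : ℕ) : ℝ) ≤ N * t := by
      have := Int.floor_le ((N:ℝ) * t)
      rw [← Int.toNat_of_nonneg hfl] at this
      exact_mod_cast this
    calc ((min (⌊(N:ℝ) * t⌋.toNat) (N-1) : ℕ) : ℝ)
        ≤ ((⌊(N:ℝ) * t⌋.toNat : ℕ) : ℝ) := by exact_mod_cast min_le_left _ _
      _ ≤ N * t := h2
  · by_cases hc : ⌊(N:ℝ) * t⌋.toNat ≤ N - 1
    · rw [min_eq_left hc]
      have h3 := Int.lt_floor_add_one ((N:ℝ) * t)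
      rw [← Int.toNat_of_nonneg hfl] at h3
      have : (N:ℝ) * t < (⌊(N:ℝ) * t⌋.toNat : ℕ) + 1 := by exact_mod_cast h3
      linarith
    · rw [min_eq_right (by omega)]
      have : ((N - 1 : ℕ) : ℝ) + 1 = N := by
        push_cast [Nat.cast_sub hN]; ring
      rw [this]
      nlinarith

lemma interp_half {x y r B : ℝ} (h1 : x < B) (h2 : y < B) (hr0 : 0 ≤ r) (hr1 : r ≤ 1) :
    (1-r)*x + r*y < B := by
  rcases lt_or_ge r 1 with hr | hr
  · have hA : (1-r)*x < (1-r)*B := mul_lt_mul_of_pos_left h1 (by linarith)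
    have hB : r*y ≤ r*B := mul_le_mul_of_nonneg_left h2.le hr0
    nlinarith
  · have : r = 1 := le_antisymm hr1 hr
    subst this; simpa using h2

lemma interp_bound {a b c r B : ℝ} (h1 : |c - a| < B) (h2 : |c - b| < B)
    (hr0 : 0 ≤ r) (hr1 : r ≤ 1) : |c - (a + (b - a) * r)| < B := by
  rw [abs_lt] at *
  constructor
  · have := interp_half (by linarith [h1.1] : a - c < B) (by linarith [h2.1] : b - c < B) hr0 hr1
    nlinarith
  · have := interp_half h1.2 h2.2 hr0 hr1
    nlinarith

lemma int_div_mem_goodSet {N : ℕ} (hN : 0 < N) (m : ℤ) : ((m:ℝ)/N) ∈ goodSet N := by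
  have hN' : (N:ℝ) ≠ 0 := Nat.cast_ne_zero.2 hN.ne'
  constructor
  · have e : 2 * Real.pi * N * ((m:ℝ)/N) = (m:ℝ) * (2 * Real.pi) := by
      field_simp
    rw [e, Real.cos_int_mul_two_pi]; norm_num
  · have e : 4 * Real.pi * N * ((m:ℝ)/N) = ((2*m : ℤ):ℝ) * (2 * Real.pi) := by
      push_cast; field_simp; ring
    rw [e, Real.cos_int_mul_two_pi]; norm_num

lemma yval_mem_goodSet (f : C(Set.Icc (0:ℝ) 1, ℝ)) {N : ℕ} (hN : 0 < N) (j : ℕ) :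
    yval f N j ∈ goodSet N := int_div_mem_goodSet hN _

lemma vert_mem_goodSet {N j : ℕ} {t : ℝ} (h1 : (j:ℝ) + 0.99 ≤ N * t)
    (h2 : (N:ℝ) * t ≤ j + 1) : t ∈ goodSet N := by
  set u : ℝ := (j:ℝ) + 1 - N * t with hu
  have hu0 : 0 ≤ u := by simp [hu]; linarith
  have hu1 : u ≤ 0.01 := by simp [hu]; linarith
  have hpi := Real.pi_lt_d2
  have hpi0 := Real.pi_pos
  constructor
  · have e : 2 * Real.pi * N * t = (((j:ℤ)+1 : ℤ):ℝ) * (2 * Real.pi) - 2 * Real.pi * u := by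
      push_cast; simp [hu]; ring
    rw [e, Real.cos_int_mul_two_pi_sub]
    have hb := Real.one_sub_sq_div_two_le_cos (x := 2 * Real.pi * u)
    have h01 : 0 ≤ 2 * Real.pi * u := by positivity
    have h02 : 2 * Real.pi * u ≤ 0.063 := by nlinarith
    have h03 : (2 * Real.pi * u) ^ 2 ≤ 0.063 ^ 2 := pow_le_pow_left₀ h01 h02 2
    nlinarith
  · have e : 4 * Real.pi * N * t = ((2*(j:ℤ)+2 : ℤ):ℝ) * (2 * Real.pi) - 4 * Real.pi * u := by
      push_cast; simp [hu]; ring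
    rw [e, Real.cos_int_mul_two_pi_sub]
    have hb := Real.one_sub_sq_div_two_le_cos (x := 4 * Real.pi * u)
    have h01 : 0 ≤ 4 * Real.pi * u := by positivity
    have h02 : 4 * Real.pi * u ≤ 0.126 := by nlinarith
    have h03 : (4 * Real.pi * u) ^ 2 ≤ 0.126 ^ 2 := pow_le_pow_left₀ h01 h02 2
    nlinarith

def nodes (N : ℕ) (k : ℕ) : ℝ :=
  if Even k then ((k/2 : ℕ):ℝ)/N else (((k/2:ℕ):ℝ) + 0.99)/N

lemma nodes_even (N j : ℕ) : nodes N (2*j) = (j:ℝ)/N := by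
  have h2 : (2*j)/2 = j := by omega
  simp [nodes, even_two_mul, h2]

lemma nodes_odd (N j : ℕ) : nodes N (2*j+1) = ((j:ℝ) + 0.99)/N := by
  have h2 : (2*j+1)/2 = j := by omega
  have hodd : ¬ Even (2*j+1) := by simp [Nat.even_add_one, even_two_mul]
  simp [nodes, hodd, h2]

end AuxGood

set_option maxHeartbeats 1000000 in
theorem good_functions_dense (f : C(Set.Icc (0:ℝ) 1, ℝ)) (ε : ℝ) (hε : 0 < ε) :
    ∃ N₀ : ℕ, ∀ N : ℕ, N₀ ≤ N →
      ∃ g : C(Set.Icc (0:ℝ) 1, ℝ), PiecewiseAffine g ∧ ‖f - g‖ < 2 * ε ∧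
        ∃ H V : Set (ℝ × ℝ), IsCompact H ∧ IsCompact V ∧ graphOf g = H ∪ V ∧
          Prod.snd '' H ⊆ goodSet N ∧ Prod.fst '' V ⊆ goodSet N := by
  -- uniform continuity
  have huc : UniformContinuous f := CompactSpace.uniformContinuous_of_continuous f.continuous
  obtain ⟨δ, hδ, hfd⟩ := Metric.uniformContinuous_iff.mp huc ε hε
  refine ⟨max (⌈1/δ⌉₊ + 1) (⌈1/ε⌉₊ + 1), fun N hN => ?_⟩
  have hN1 : 0 < N := by
    have := le_trans (le_max_left _ _) hN; omega
  have hN' : (0:ℝ) < N := by exact_mod_cast hN1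
  have hNδ : 1/(N:ℝ) < δ := by
    have h1 : (1:ℝ)/δ < N := by
      have h2 : ((⌈1/δ⌉₊ + 1 : ℕ) : ℝ) ≤ N := by
        exact_mod_cast le_trans (le_max_left _ _) hN
      have h3 := Nat.le_ceil (1/δ)
      push_cast at h2
      linarith
    rw [div_lt_iff₀ hN']
    rw [div_lt_iff₀ hδ] at h1
    linarith [mul_comm δ (N:ℝ)]
  have hNε : 1/(N:ℝ) < ε := by
    have h1 : (1:ℝ)/ε < N := by
      have h2 : ((⌈1/ε⌉₊ + 1 : ℕ) : ℝ) ≤ N := by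
        exact_mod_cast le_trans (le_max_right _ _) hN
      have h3 := Nat.le_ceil (1/ε)
      push_cast at h2
      linarith
    rw [div_lt_iff₀ hN']
    rw [div_lt_iff₀ hε] at h1
    linarith [mul_comm ε (N:ℝ)]
  set g := gFun f N with hg
  -- closeness of yval to f
  have hclose : ∀ (j : ℕ) (t : Set.Icc (0:ℝ) 1), j ≤ N → |(t:ℝ) - (j:ℝ)/N| ≤ 1/N →
      |f t - yval f N j| < ε + 1/(2*N) := by
    intro j t hjN hdist
    have hmem : (j:ℝ)/N ∈ Set.Icc (0:ℝ) 1 := by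
      constructor
      · positivity
      · rw [div_le_one hN']; exact_mod_cast hjN
    have hproj : Set.projIcc 0 1 zero_le_one ((j:ℝ)/N) = ⟨(j:ℝ)/N, hmem⟩ :=
      Set.projIcc_of_mem _ hmem
    have hterm1 : |f t - f ⟨(j:ℝ)/N, hmem⟩| < ε := by
      have := hfd (a := t) (b := ⟨(j:ℝ)/N, hmem⟩) (by
        rw [Subtype.dist_eq, Real.dist_eq]
        exact lt_of_le_of_lt hdist hNδ)
      rwa [Real.dist_eq] at this
    have hterm2 : |f ⟨(j:ℝ)/N, hmem⟩ - yval f N j| ≤ 1/(2*N) := by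
      rw [yval, hproj]
      have e : f ⟨(j:ℝ)/N, hmem⟩ - (round ((N:ℝ) * f ⟨(j:ℝ)/N, hmem⟩) : ℝ)/N
          = ((N:ℝ) * f ⟨(j:ℝ)/N, hmem⟩ - round ((N:ℝ) * f ⟨(j:ℝ)/N, hmem⟩))/N := by
        field_simp
      rw [e, abs_div, abs_of_pos hN']
      have := abs_sub_round ((N:ℝ) * f ⟨(j:ℝ)/N, hmem⟩)
      rw [div_le_div_iff₀ hN' (by positivity)]
      nlinarith
    calc |f t - yval f N j| ≤ |f t - f ⟨(j:ℝ)/N, hmem⟩| + |f ⟨(j:ℝ)/N, hmem⟩ - yval f N j| := by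
          have := abs_sub_abs_le_abs_sub (f t - yval f N j) 0
          exact abs_sub_le _ _ _
      _ < ε + 1/(2*N) := by linarith
  -- pointwise estimate
  have hpoint : ∀ t : Set.Icc (0:ℝ) 1, |f t - g t| < ε + 1/(2*N) := by
    intro t
    obtain ⟨j, hj, hj1, hj2⟩ := exists_mem_block hN1 t.2.1 t.2.2
    have hdj : |(t:ℝ) - (j:ℝ)/N| ≤ 1/N := by
      rw [abs_le]
      have hlb : (j:ℝ)/N ≤ t := by rw [div_le_iff₀ hN']; linarith [mul_comm (t:ℝ) (N:ℝ)]
      have hub : (t:ℝ) ≤ ((j:ℝ)+1)/N := by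
        rw [le_div_iff₀ hN']; linarith [mul_comm (t:ℝ) (N:ℝ)]
      have h5 : ((j:ℝ)+1)/N = (j:ℝ)/N + 1/N := by ring
      have h7 : (0:ℝ) ≤ 1/N := by positivity
      constructor <;> linarith
    by_cases hflat : (N:ℝ) * t ≤ j + 0.99
    · rw [hg, gFun_flat f hj t hj1 hflat]
      exact hclose j t hj.le hdj
    · push_neg at hflat
      by_cases hlast : j + 1 < N
      · rw [hg, gFun_vert f hlast t hflat.le hj2]
        have hdj1 : |(t:ℝ) - ((j+1:ℕ):ℝ)/N| ≤ 1/N := by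
          push_cast
          rw [abs_le]
          have hub : (t:ℝ) ≤ ((j:ℝ)+1)/N := by
            rw [le_div_iff₀ hN']; linarith [mul_comm (t:ℝ) (N:ℝ)]
          have hlb : ((j:ℝ)+0.99)/N ≤ t := by
            rw [div_le_iff₀ hN']; linarith [mul_comm (t:ℝ) (N:ℝ)]
          have h5 : ((j:ℝ)+1)/N = ((j:ℝ)+0.99)/N + 0.01/N := by ring
          have h6 : (0.01:ℝ)/N ≤ 1/N := by
            gcongr
            norm_num
          have h7 : (0:ℝ) ≤ 1/N := by positivity
          constructor <;> linarith
        have hb1 := hclose j t hj.le hdj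
        have hb2 := hclose (j+1) t hlast.le hdj1
        exact interp_bound hb1 hb2 (by nlinarith) (by nlinarith)
      · have hje : j = N - 1 := by omega
        have hjr : ((j:ℕ):ℝ) = (N:ℝ) - 1 := by
          have : j + 1 = N := by omega
          have := congrArg (fun n : ℕ => (n:ℝ)) this
          push_cast at this
          linarith
        rw [hg, gFun_last f hN1 t (by rw [← hjr]; nlinarith), ← hje]
        exact hclose j t hj.le hdj
  -- the pieces
  refine ⟨g, ?_, ?_, ?_⟩
  · -- PiecewiseAffine
    refine ⟨2*N, nodes N, by omega, ?_, ?_, ?_, ?_⟩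
    · have := nodes_even N 0; simpa using this
    · have := nodes_even N N
      rw [this, div_self hN'.ne']
    · intro k hk
      rcases Nat.even_or_odd' k with ⟨j, rfl | rfl⟩
      · rw [nodes_even, nodes_odd]
        rw [div_lt_div_iff₀ hN' hN']
        nlinarith
      · have : 2*j+1+1 = 2*(j+1) := by ring
        rw [nodes_odd, this, nodes_even]
        rw [div_lt_div_iff₀ hN' hN']
        push_cast
        nlinarith
    · intro k hk
      rcases Nat.even_or_odd' k with ⟨j, rfl | rfl⟩
      · -- horizontal piece
        have hj : j < N := by omega
        refine ⟨0, yval f N j, fun t ht => ?_⟩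
        rw [nodes_even] at ht
        rw [show (2*j+1 : ℕ) = 2*j+1 from rfl, nodes_odd] at ht
        have h1 : (j:ℝ) ≤ N * t := by
          have := ht.1; rw [div_le_iff₀ hN'] at this; linarith [mul_comm (t:ℝ) (N:ℝ)]
        have h2 : (N:ℝ) * t ≤ j + 0.99 := by
          have := ht.2; rw [le_div_iff₀ hN'] at this; linarith [mul_comm (t:ℝ) (N:ℝ)]
        rw [hg, gFun_flat f hj t h1 h2]
        ring
      · -- vertical piece
        have hj : j < N := by omega
        have he : 2*j+1+1 = 2*(j+1) := by ring
        by_cases hlast : j + 1 < N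
        · refine ⟨(yval f N (j+1) - yval f N j) * (100*N),
            yval f N j + (yval f N (j+1) - yval f N j)*(1 - 100*((j:ℝ)+1)), fun t ht => ?_⟩
          rw [nodes_odd, he, nodes_even] at ht
          have h1 : (j:ℝ) + 0.99 ≤ N * t := by
            have := ht.1; rw [div_le_iff₀ hN'] at this; linarith [mul_comm (t:ℝ) (N:ℝ)]
          have h2 : (N:ℝ) * t ≤ j + 1 := by
            have := ht.2; rw [le_div_iff₀ hN'] at this
            push_cast at this; linarith [mul_comm (t:ℝ) (N:ℝ)]
          rw [hg, gFun_vert f hlast t h1 h2]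
          push_cast
          ring
        · have hje : j = N - 1 := by omega
          have hjr : ((j:ℕ):ℝ) = (N:ℝ) - 1 := by
            have h6 : j + 1 = N := by omega
            have := congrArg (fun n : ℕ => (n:ℝ)) h6
            push_cast at this
            linarith
          refine ⟨0, yval f N j, fun t ht => ?_⟩
          rw [nodes_odd, he, nodes_even] at ht
          have h1 : (j:ℝ) + 0.99 ≤ N * t := by
            have := ht.1; rw [div_le_iff₀ hN'] at this; linarith [mul_comm (t:ℝ) (N:ℝ)]
          rw [hg, gFun_last f hN1 t (by rw [← hjr]; nlinarith), ← hje]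
          ring
  · -- norm bound
    rw [ContinuousMap.norm_lt_iff _ (by positivity)]
    intro t
    have h1 := hpoint t
    have h2 : 1/(2*(N:ℝ)) < ε := by
      have : 1/(2*(N:ℝ)) ≤ 1/N := by
        apply div_le_div_of_nonneg_left one_pos.le hN'; linarith
      linarith
    calc ‖(f - g) t‖ = |f t - g t| := by
          simp [ContinuousMap.sub_apply, Real.norm_eq_abs]
      _ < ε + 1/(2*N) := h1
      _ < 2*ε := by linarith
  · -- graph decomposition
    set Φ : Set.Icc (0:ℝ) 1 → ℝ × ℝ := fun t => ((t:ℝ), g t) with hΦdef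
    have hΦ : Continuous Φ := continuous_subtype_val.prodMk g.continuous
    set KH : Set ℝ := ⋃ j ∈ Finset.range N, Set.Icc ((j:ℝ)/N) (((j:ℝ)+0.99)/N) with hKH
    set KV : Set ℝ := ⋃ j ∈ Finset.range N, Set.Icc (((j:ℝ)+0.99)/N) (((j:ℝ)+1)/N) with hKV
    have hKHc : IsClosed KH := by
      apply Set.Finite.isClosed_biUnion (Finset.finite_toSet _)
      intro j _; exact isClosed_Icc
    have hKVc : IsClosed KV := by
      apply Set.Finite.isClosed_biUnion (Finset.finite_toSet _)
      intro j _; exact isClosed_Icc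
    refine ⟨Φ '' (Subtype.val ⁻¹' KH), Φ '' (Subtype.val ⁻¹' KV), ?_, ?_, ?_, ?_, ?_⟩
    · exact ((hKHc.preimage continuous_subtype_val).isCompact).image hΦ
    · exact ((hKVc.preimage continuous_subtype_val).isCompact).image hΦ
    · have hcover : ∀ t : Set.Icc (0:ℝ) 1, (t:ℝ) ∈ KH ∪ KV := by
        intro t
        obtain ⟨j, hj, hj1, hj2⟩ := exists_mem_block hN1 t.2.1 t.2.2
        by_cases hflat : (N:ℝ) * t ≤ j + 0.99
        · left
          rw [hKH]
          refine Set.mem_biUnion (Finset.mem_range.2 hj) ⟨?_, ?_⟩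
          · rw [div_le_iff₀ hN']; linarith [mul_comm (t:ℝ) (N:ℝ)]
          · rw [le_div_iff₀ hN']; linarith [mul_comm (t:ℝ) (N:ℝ)]
        · right
          rw [hKV]
          refine Set.mem_biUnion (Finset.mem_range.2 hj) ⟨?_, ?_⟩
          · rw [div_le_iff₀ hN']; push_neg at hflat; linarith [mul_comm (t:ℝ) (N:ℝ)]
          · rw [le_div_iff₀ hN']; linarith [mul_comm (t:ℝ) (N:ℝ)]
      have h1 : graphOf g = Set.range Φ := by
        ext p
        constructor
        · rintro ⟨x, h1, h2⟩
          exact ⟨x, (Prod.ext_iff.2 ⟨h1.symm, h2.symm⟩)⟩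
        · rintro ⟨x, rfl⟩
          exact ⟨x, rfl, rfl⟩
      have h2 : (Set.univ : Set (Set.Icc (0:ℝ) 1)) =
          (Subtype.val ⁻¹' KH) ∪ (Subtype.val ⁻¹' KV) := by
        symm
        apply Set.eq_univ_of_forall
        intro t
        exact hcover t
      rw [h1, ← Set.image_univ, h2, Set.image_union]
    · rintro y ⟨p, ⟨t, ht, rfl⟩, rfl⟩
      rw [hKH] at ht
      simp only [Set.mem_preimage, Set.mem_iUnion] at ht
      obtain ⟨j, hj, hmem⟩ := ht
      have hj' : j < N := Finset.mem_range.1 hj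
      have h1 : (j:ℝ) ≤ N * t := by
        have := hmem.1; rw [div_le_iff₀ hN'] at this; linarith [mul_comm (t:ℝ) (N:ℝ)]
      have h2 : (N:ℝ) * t ≤ j + 0.99 := by
        have := hmem.2; rw [le_div_iff₀ hN'] at this; linarith [mul_comm (t:ℝ) (N:ℝ)]
      have : Φ t = ((t:ℝ), yval f N j) := by
        rw [hΦdef]; simp only
        rw [hg, gFun_flat f hj' t h1 h2]
      rw [this]
      exact yval_mem_goodSet f hN1 j
    · rintro x ⟨p, ⟨t, ht, rfl⟩, rfl⟩
      rw [hKV] at ht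
      simp only [Set.mem_preimage, Set.mem_iUnion] at ht
      obtain ⟨j, hj, hmem⟩ := ht
      have h1 : (j:ℝ) + 0.99 ≤ N * t := by
        have := hmem.1; rw [div_le_iff₀ hN'] at this; linarith [mul_comm (t:ℝ) (N:ℝ)]
      have h2 : (N:ℝ) * t ≤ j + 1 := by
        have := hmem.2; rw [le_div_iff₀ hN'] at this; linarith [mul_comm (t:ℝ) (N:ℝ)]
      exact vert_mem_goodSet h1 h2
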